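/- arXiv:1708.04142 — 2 statements merged into one kernel-verified Lean document; each statement's English description precedes it below -/
import Mathlib

section
/- Uniqueness of the single-index direction: Let p ≥ 1, let U ⊆ ℝ^p be a nonempty open connected set, and let α, α̃ ∈ ℝ^p satisfy ‖α‖ = ‖α̃‖ = 1 with the first nonzero entry of α and of α̃ positive. Let g, g̃ : ℝ → ℝ be differentiable functions such that g is non-constant on the interval {αᵀx : x ∈ U}. If g(αᵀx) = g̃(α̃ᵀx) for all x ∈ U, then α = α̃ and g(z) = g̃(z) for all z in {αᵀx : x ∈ U}. -/
open scoped RealInnerProductSpace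

/-- The first nonzero entry of `α` is positive. -/
def FirstNonzeroPos {p : ℕ} (α : EuclideanSpace ℝ (Fin p)) : Prop :=
  ∃ i : Fin p, (∀ j : Fin p, j < i → α j = 0) ∧ 0 < α i

/-- `f` is non-constant on the set `T`. -/
def NonconstOn (f : ℝ → ℝ) (T : Set ℝ) : Prop :=
  ∃ z₁ ∈ T, ∃ z₂ ∈ T, f z₁ ≠ f z₂

/-!
Differentiating `g ⟪α, x⟫ = g' ⟪α', x⟫` at `x₀ ∈ U` gives
`(deriv g ⟪α, x₀⟫) • α = (deriv g' ⟪α', x₀⟫) • α'`.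
The index range `{⟪α, x⟫ : x ∈ U}` is an interval on which `g` is not constant, so by the mean
value theorem `x₀` can be chosen with `deriv g ⟪α, x₀⟫ ≠ 0`. Then `α` and `α'` are parallel unit
vectors, so `α' = ±α`, and the sign normalisation excludes `α' = -α`.
-/

lemma NonconstOn.exists_deriv_ne_zero {g : ℝ → ℝ} {T : Set ℝ} (hnc : NonconstOn g T)
    (hT : Convex ℝ T) (hg : ∀ z ∈ T, DifferentiableAt ℝ g z) : ∃ z ∈ T, deriv g z ≠ 0 := by
  by_contra! hderiv
  obtain ⟨z₁, hz₁, z₂, hz₂, hne⟩ := hnc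
  have hle : ‖g z₂ - g z₁‖ ≤ 0 * ‖z₂ - z₁‖ :=
    hT.norm_image_sub_le_of_norm_deriv_le hg (fun z hz => by simp [hderiv z hz]) hz₁ hz₂
  exact hne (by simpa [sub_eq_zero, eq_comm] using hle)

section

variable {E : Type*} [NormedAddCommGroup E] [InnerProductSpace ℝ E]

lemma hasFDerivAt_comp_inner {g : ℝ → ℝ} {a x : E} (hg : DifferentiableAt ℝ g ⟪a, x⟫) :
    HasFDerivAt (fun y => g ⟪a, y⟫) (deriv g ⟪a, x⟫ • innerSL ℝ a) x :=
  hg.hasDerivAt.comp_hasFDerivAt x (innerSL ℝ a).hasFDerivAt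

lemma deriv_smul_eq_of_comp_inner_eventuallyEq {g g' : ℝ → ℝ} {a a' x : E}
    (hg : DifferentiableAt ℝ g ⟪a, x⟫) (hg' : DifferentiableAt ℝ g' ⟪a', x⟫)
    (heq : (fun y => g ⟪a, y⟫) =ᶠ[nhds x] fun y => g' ⟪a', y⟫) :
    deriv g ⟪a, x⟫ • a = deriv g' ⟪a', x⟫ • a' := by
  have hfderiv := ((hasFDerivAt_comp_inner hg).congr_of_eventuallyEq heq.symm).unique
    (hasFDerivAt_comp_inner hg')
  refine ext_inner_right ℝ fun v => ?_
  simpa [real_inner_smul_left] using congrArg (fun L => L v) hfderiv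

lemma eq_or_eq_neg_of_eq_smul_of_norm_eq_one {a b : E} {c : ℝ} (h : a = c • b)
    (ha : ‖a‖ = 1) (hb : ‖b‖ = 1) : a = b ∨ a = -b := by
  have hc : |c| = 1 := by simpa [h, norm_smul, hb] using ha
  rcases (abs_eq zero_le_one).mp hc with rfl | rfl
  · simp [h]
  · simp [h]

end

namespace FirstNonzeroPos

variable {p : ℕ} {α α' : EuclideanSpace ℝ (Fin p)}

lemma not_neg (hα : FirstNonzeroPos α) : ¬ FirstNonzeroPos (-α) := by
  rintro ⟨i', hi', hi'pos⟩
  obtain ⟨i, hi, hipos⟩ := hα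
  rcases lt_trichotomy i i' with h | rfl | h
  · have := hi' i h
    simp only [PiLp.neg_apply, neg_eq_zero] at this
    linarith
  · simp only [PiLp.neg_apply] at hi'pos
    linarith
  · simp [hi i' h] at hi'pos

lemma eq_of_smul_eq_smul (hα : FirstNonzeroPos α) (hα' : FirstNonzeroPos α')
    (hαn : ‖α‖ = 1) (hα'n : ‖α'‖ = 1) {c c' : ℝ} (hc : c ≠ 0) (h : c • α = c' • α') :
    α = α' := by
  have hαc : α = (c⁻¹ * c') • α' := by rw [← smul_smul, ← h, inv_smul_smul₀ hc]
  rcases eq_or_eq_neg_of_eq_smul_of_norm_eq_one hαc hαn hα'n with h | h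
  · exact h
  · exact absurd (h ▸ hα) hα'.not_neg

end FirstNonzeroPos

theorem single_index_direction_unique_general
    {p : ℕ}
    (U : Set (EuclideanSpace ℝ (Fin p))) (hUopen : IsOpen U) (hUconn : IsConnected U)
    (α α' : EuclideanSpace ℝ (Fin p))
    (hα : ‖α‖ = 1) (hα' : ‖α'‖ = 1)
    (hαpos : FirstNonzeroPos α) (hα'pos : FirstNonzeroPos α')
    (g g' : ℝ → ℝ)
    (hg : Differentiable ℝ g) (hg' : Differentiable ℝ g')
    (hnc : NonconstOn g ((fun x => ⟪α, x⟫) '' U))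
    (heq : ∀ x ∈ U, g ⟪α, x⟫ = g' ⟪α', x⟫) :
    α = α' ∧ ∀ z ∈ (fun x => ⟪α, x⟫) '' U, g z = g' z := by
  have hrange : Convex ℝ ((fun x => ⟪α, x⟫) '' U) :=
    (hUconn.isPreconnected.image _ (continuous_const.inner continuous_id).continuousOn)
      |>.ordConnected.convex
  obtain ⟨_, ⟨x₀, hx₀, rfl⟩, hderiv⟩ := hnc.exists_deriv_ne_zero hrange fun z _ => hg z
  have hvec : deriv g ⟪α, x₀⟫ • α = deriv g' ⟪α', x₀⟫ • α' :=
    deriv_smul_eq_of_comp_inner_eventuallyEq (hg _) (hg' _)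
      (Filter.eventuallyEq_of_mem (hUopen.mem_nhds hx₀) heq)
  obtain rfl := hαpos.eq_of_smul_eq_smul hα'pos hα hα' hderiv hvec
  exact ⟨rfl, fun _ ⟨x, hx, hz⟩ => hz ▸ heq x hx⟩

/-- Uniqueness of the single-index direction: if two single-index representations
agree on a nonempty open connected set and the link function is non-constant there,
then the (normalized, sign-fixed) directions coincide and the link functions agree
on the common index range. -/
theorem single_index_direction_unique
    {p : ℕ} (hp : 1 ≤ p)
    (U : Set (EuclideanSpace ℝ (Fin p))) (hUopen : IsOpen U) (hUconn : IsConnected U)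
    (α α' : EuclideanSpace ℝ (Fin p))
    (hα : ‖α‖ = 1) (hα' : ‖α'‖ = 1)
    (hαpos : FirstNonzeroPos α) (hα'pos : FirstNonzeroPos α')
    (g g' : ℝ → ℝ)
    (hg : Differentiable ℝ g) (hg' : Differentiable ℝ g')
    (hnc : NonconstOn g ((fun x => ⟪α, x⟫) '' U))
    (heq : ∀ x ∈ U, g ⟪α, x⟫ = g' ⟪α', x⟫) :
    α = α' ∧ ∀ z ∈ (fun x => ⟪α, x⟫) '' U, g z = g' z :=
  single_index_direction_unique_general U hUopen hUconn α α' hα hα' hαpos hα'pos g g' hg hg' hnc heq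
end

section
/- Identifiability of scalar nonparametric mixtures of regressions (the one-dimensional reduction used in the proof of the MSIM identifiability theorem): Let I ⊆ ℝ be a nonempty open interval and let k, k̃ ≥ 1. Suppose for j = 1, …, k the functions π_j : ℝ → (0,1), m_j : ℝ → ℝ, σ_j² : ℝ → (0,∞) are differentiable with Σ_{j=1}^k π_j(z) = 1 for all z, and for every pair 1 ≤ i ≠ j ≤ k and every z ∈ I, (m_i(z) − m_j(z))² + (m_i′(z) − m_j′(z))² + (σ_i²(z) − σ_j²(z))² + ((σ_i²)′(z) − (σ_j²)′(z))² ≠ 0; suppose the analogous assumptions hold for π̃_j, m̃_j, σ̃_j², j = 1, …, k̃. If for every z ∈ I and every y ∈ ℝ, Σ_{j=1}^k π_j(z) φ(y | m_j(z), σ_j²(z)) = Σ_{j=1}^{k̃} π̃_j(z) φ(y | m̃_j(z), σ̃_j²(z)), then k = k̃ and there exists a permutation τ of {1, …, k} such that π_j(z) = π̃_{τ(j)}(z), m_j(z) = m̃_{τ(j)}(z), and σ_j²(z) = σ̃_{τ(j)}²(z) for all z ∈ I. -/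
/-!
Distinct normal densities are linearly independent (compare their tails as `y → ∞`), so a
finite normal mixture with nonzero weights and distinct parameters determines its components.
This matches the two families by a bijection at every `z` where both have distinct parameters,
and by the separation condition such `z` fill `I` up to isolated points. On either side of an
isolated point the matching is constant, by connectedness and continuity, and the two one-sided
matchings agree, since otherwise two components of the second family would share value and
derivative there. Connectedness of `I` then propagates a single matching to all of `I`.
-/

open Filter Topology Set Function

noncomputable def normalPDF (y μ v : ℝ) : ℝ :=
  (Real.sqrt (2 * Real.pi * v))⁻¹ * Real.exp (-(y - μ) ^ 2 / (2 * v))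

theorem normalPDF_pos (y μ : ℝ) {v : ℝ} (hv : 0 < v) : 0 < normalPDF y μ v := by
  unfold normalPDF; positivity

theorem tendsto_quadratic_atTop_atBot {a b c : ℝ} (h : a < 0 ∨ a = 0 ∧ b < 0) :
    Tendsto (fun y => a * y ^ 2 + b * y + c) atTop atBot := by
  rcases h with ha | ⟨rfl, hb⟩
  · have hlim : Tendsto (fun y : ℝ => a + b * y⁻¹ + c * (y⁻¹) ^ 2) atTop (𝓝 a) := by
      simpa using (tendsto_const_nhds.add (tendsto_inv_atTop_zero.const_mul b)).add
        ((tendsto_inv_atTop_zero.pow 2).const_mul c)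
    refine ((tendsto_pow_atTop two_ne_zero).atTop_mul_neg ha hlim).congr' ?_
    filter_upwards [eventually_ne_atTop 0] with y hy
    field_simp
  · simpa using tendsto_atBot_add_const_right _ c
      ((tendsto_const_mul_atBot_of_neg hb).2 tendsto_id)

theorem normalPDF_div_normalPDF (y : ℝ) {μ v μ₀ v₀ : ℝ} (hv : 0 < v) (hv₀ : 0 < v₀) :
    normalPDF y μ v / normalPDF y μ₀ v₀ =
      Real.sqrt (2 * Real.pi * v₀) / Real.sqrt (2 * Real.pi * v) *
        Real.exp (((2 * v₀)⁻¹ - (2 * v)⁻¹) * y ^ 2 + (μ / v - μ₀ / v₀) * y +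
          (μ₀ ^ 2 / (2 * v₀) - μ ^ 2 / (2 * v))) := by
  have hexp : ((2 * v₀)⁻¹ - (2 * v)⁻¹) * y ^ 2 + (μ / v - μ₀ / v₀) * y +
      (μ₀ ^ 2 / (2 * v₀) - μ ^ 2 / (2 * v)) =
        -(y - μ) ^ 2 / (2 * v) - -(y - μ₀) ^ 2 / (2 * v₀) := by
    field_simp; ring
  rw [hexp, Real.exp_sub, normalPDF, normalPDF]
  have : Real.sqrt (2 * Real.pi * v) ≠ 0 := by positivity
  have : Real.sqrt (2 * Real.pi * v₀) ≠ 0 := by positivity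
  field_simp

theorem tendsto_normalPDF_div_normalPDF_atTop {μ v μ₀ v₀ : ℝ} (hv : 0 < v) (hv₀ : 0 < v₀)
    (h : toLex (v, μ) < toLex (v₀, μ₀)) :
    Tendsto (fun y => normalPDF y μ v / normalPDF y μ₀ v₀) atTop (𝓝 0) := by
  have hcoeff : (2 * v₀)⁻¹ - (2 * v)⁻¹ < 0 ∨
      (2 * v₀)⁻¹ - (2 * v)⁻¹ = 0 ∧ μ / v - μ₀ / v₀ < 0 := by
    rcases Prod.Lex.lt_iff.1 h with hlt | ⟨heq, hlt⟩
    · exact Or.inl (sub_neg.2 (inv_strictAnti₀ (by positivity) (by simpa using hlt)))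
    · simp only [ofLex_toLex] at heq hlt
      subst heq
      refine Or.inr ⟨sub_self _, ?_⟩
      rw [div_sub_div_same]
      exact div_neg_of_neg_of_pos (by linarith) hv
  simp_rw [normalPDF_div_normalPDF _ hv hv₀]
  simpa using ((Real.tendsto_exp_atBot.comp (tendsto_quadratic_atTop_atBot hcoeff)).const_mul _)

theorem tendsto_sum_mul_normalPDF_div_atTop {ι : Type*} {s : Finset ι} {c μ v : ι → ℝ}
    (hv : ∀ i ∈ s, 0 < v i) {i₀ : ι} (hi₀ : i₀ ∈ s)
    (hmax : ∀ i ∈ s, i ≠ i₀ → toLex (v i, μ i) < toLex (v i₀, μ i₀)) :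
    Tendsto (fun y => (∑ i ∈ s, c i * normalPDF y (μ i) (v i)) / normalPDF y (μ i₀) (v i₀))
      atTop (𝓝 (c i₀)) := by
  classical
  simp_rw [Finset.sum_div, mul_div_assoc]
  rw [show c i₀ = ∑ i ∈ s, if i = i₀ then c i else 0 by simp [hi₀]]
  refine tendsto_finsetSum _ fun i hi => ?_
  split_ifs with h
  · subst h
    simp [div_self (normalPDF_pos _ _ (hv i hi)).ne']
  · simpa using (tendsto_normalPDF_div_normalPDF_atTop (hv i hi) (hv i₀ hi₀)
      (hmax i hi h)).const_mul (c i)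

theorem linearIndependent_normalPDF :
    LinearIndependent ℝ
      (fun (q : {q : ℝ × ℝ // 0 < q.2}) (y : ℝ) => normalPDF y q.1.1 q.1.2) := by
  classical
  rw [linearIndependent_iff']
  intro s
  induction s using Finset.strongInduction with
  | H s ih =>
  intro c hc i hi
  obtain ⟨i₀, hi₀, hmax⟩ := s.exists_max_image (fun q => toLex (q.1.2, q.1.1)) ⟨i, hi⟩
  have hsum : ∀ y, ∑ q ∈ s, c q * normalPDF y q.1.1 q.1.2 = 0 := fun y => by
    simpa using congrFun hc y
  have hc₀ : c i₀ = 0 := by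
    refine tendsto_nhds_unique (tendsto_sum_mul_normalPDF_div_atTop (fun q _ => q.2) hi₀
      fun q hq hne => (hmax q hq).lt_of_ne ?_) (by simp [hsum])
    intro h
    exact hne (Subtype.ext (Prod.ext (congrArg (·.2) h) (congrArg (·.1) h)))
  obtain rfl | hne := eq_or_ne i i₀
  · exact hc₀
  refine ih _ (Finset.erase_ssubset hi₀) c ?_ i (Finset.mem_erase.2 ⟨hne, hi⟩)
  rwa [Finset.sum_erase _ (by rw [hc₀, zero_smul])]

theorem LinearIndependent.exists_equiv_of_sum_smul_eq {R M κ ι ι' : Type*} [Ring R]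
    [AddCommGroup M] [Module R M] [Fintype ι] [Fintype ι'] {f : κ → M}
    (hf : LinearIndependent R f) {a : ι → R} {b : ι' → R} {p : ι → κ} {p' : ι' → κ}
    (hp : Injective p) (hp' : Injective p') (ha : ∀ i, a i ≠ 0) (hb : ∀ i, b i ≠ 0)
    (h : ∑ i, a i • f (p i) = ∑ i, b i • f (p' i)) :
    ∃ e : ι ≃ ι', ∀ i, a i = b (e i) ∧ p i = p' (e i) := by
  classical
  set A : κ →₀ R := ∑ i, Finsupp.single (p i) (a i)
  set B : κ →₀ R := ∑ i, Finsupp.single (p' i) (b i)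
  have hAB : A = B := hf (by simpa [A, B, map_sum] using h)
  have hA : ∀ q, A q = ∑ i, if p i = q then a i else 0 := fun q => by
    simp [A, Finsupp.finsetSum_apply, Finsupp.single_apply]
  have hB : ∀ q, B q = ∑ i, if p' i = q then b i else 0 := fun q => by
    simp [B, Finsupp.finsetSum_apply, Finsupp.single_apply]
  have hApi : ∀ i, A (p i) = a i := fun i => by simp [hA, hp.eq_iff]
  have hBpi : ∀ i, B (p' i) = b i := fun i => by simp [hB, hp'.eq_iff]
  have hrange : ∀ i, ∃ i', p' i' = p i := by
    intro i
    by_contra! hne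
    exact ha i (by rw [← hApi, hAB, hB]; simp [hne])
  have hrange' : ∀ i', ∃ i, p i = p' i' := by
    intro i'
    by_contra! hne
    exact hb i' (by rw [← hBpi, ← hAB, hA]; simp [hne])
  choose e he using hrange
  have hbij : Bijective e := by
    refine ⟨fun i j hij => hp ?_, fun i' => ?_⟩
    · rw [← he i, ← he j, hij]
    · obtain ⟨i, hi⟩ := hrange' i'
      exact ⟨i, hp' (by rw [he, hi])⟩
  refine ⟨Equiv.ofBijective e hbij, fun i => ⟨?_, (he i).symm⟩⟩
  rw [Equiv.ofBijective_apply, ← hApi, hAB, ← he, hBpi]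

theorem exists_equiv_of_normal_mixture_eq {ι ι' : Type*} [Fintype ι] [Fintype ι']
    {a μ v : ι → ℝ} {b μ' v' : ι' → ℝ} (ha : ∀ i, a i ≠ 0) (hb : ∀ i, b i ≠ 0)
    (hv : ∀ i, 0 < v i) (hv' : ∀ i, 0 < v' i)
    (hinj : Injective fun i => (μ i, v i)) (hinj' : Injective fun i => (μ' i, v' i))
    (h : ∀ y, ∑ i, a i * normalPDF y (μ i) (v i) = ∑ i, b i * normalPDF y (μ' i) (v' i)) :
    ∃ e : ι ≃ ι', ∀ i, a i = b (e i) ∧ (μ i, v i) = (μ' (e i), v' (e i)) := by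
  obtain ⟨e, he⟩ := linearIndependent_normalPDF.exists_equiv_of_sum_smul_eq
    (p := fun i => ⟨(μ i, v i), hv i⟩) (p' := fun i => ⟨(μ' i, v' i), hv' i⟩)
    (fun i j hij => hinj (congrArg Subtype.val hij))
    (fun i j hij => hinj' (congrArg Subtype.val hij)) ha hb (funext fun y => by simpa using h y)
  exact ⟨e, fun i => ⟨(he i).1, congrArg Subtype.val (he i).2⟩⟩

theorem Set.exists_subset_of_cover_of_forall_subset_or_subset {X ι : Type*} {s : Set X}
    {S : ι → Set X} (hne : s.Nonempty) (hcover : s ⊆ ⋃ i, S i)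
    (hdisj : Pairwise fun i j => s ∩ (S i ∩ S j) = ∅)
    (hsplit : ∀ i, s ⊆ S i ∪ ⋃ j ≠ i, S j → s ∩ (S i ∩ ⋃ j ≠ i, S j) = ∅ →
      s ⊆ S i ∨ s ⊆ ⋃ j ≠ i, S j) :
    ∃ i, s ⊆ S i := by
  obtain ⟨x, hx⟩ := hne
  obtain ⟨i, hxi⟩ := mem_iUnion.1 (hcover hx)
  refine ⟨i, (hsplit i ?_ ?_).resolve_right ?_⟩
  · intro y hy
    obtain ⟨j, hyj⟩ := mem_iUnion.1 (hcover hy)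
    obtain rfl | hji := eq_or_ne j i
    exacts [Or.inl hyj, Or.inr (mem_biUnion hji hyj)]
  · refine eq_empty_of_forall_notMem fun y ⟨hy, hyi, hyU⟩ => ?_
    obtain ⟨j, hji, hyj⟩ := mem_iUnion₂.1 hyU
    exact (hdisj hji).subset ⟨hy, hyj, hyi⟩
  · intro hsub
    obtain ⟨j, hji, hxj⟩ := mem_iUnion₂.1 (hsub hx)
    exact (hdisj hji).subset ⟨hx, hxj, hxi⟩

theorem IsPreconnected.exists_subset_of_isOpen_cover {X ι : Type*} [TopologicalSpace X]
    {s : Set X} {U : ι → Set X} (hs : IsPreconnected s) (hne : s.Nonempty)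
    (hU : ∀ i, IsOpen (U i)) (hcover : s ⊆ ⋃ i, U i)
    (hdisj : Pairwise fun i j => s ∩ (U i ∩ U j) = ∅) : ∃ i, s ⊆ U i :=
  exists_subset_of_cover_of_forall_subset_or_subset hne hcover hdisj fun i =>
    isPreconnected_iff_subset_of_disjoint.1 hs _ _ (hU i) (isOpen_biUnion fun j _ => hU j)

theorem IsPreconnected.exists_subset_of_isClosed_cover {X ι : Type*} [TopologicalSpace X]
    [Finite ι] {s : Set X} {S : ι → Set X} (hs : IsPreconnected s) (hne : s.Nonempty)
    (hS : ∀ i, IsClosed (S i)) (hcover : s ⊆ ⋃ i, S i)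
    (hdisj : Pairwise fun i j => s ∩ (S i ∩ S j) = ∅) : ∃ i, s ⊆ S i :=
  exists_subset_of_cover_of_forall_subset_or_subset hne hcover hdisj fun i =>
    isPreconnected_iff_subset_of_disjoint_closed.1 hs _ _ (hS i)
      ((Set.toFinite _).isClosed_biUnion fun j _ => hS j)

theorem eventually_nhdsNE_ne_of_ne_or_deriv_ne {𝕜 F : Type*} [NontriviallyNormedField 𝕜]
    [NormedAddCommGroup F] [NormedSpace 𝕜 F] {f g : 𝕜 → F} {z : 𝕜}
    (hf : DifferentiableAt 𝕜 f z) (hg : DifferentiableAt 𝕜 g z)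
    (h : f z ≠ g z ∨ deriv f z ≠ deriv g z) : ∀ᶠ x in 𝓝[≠] z, f x ≠ g x := by
  by_cases hz : f z = g z
  · have hd : HasDerivAt (f - g) (deriv f z - deriv g z) z :=
      hf.hasDerivAt.sub hg.hasDerivAt
    filter_upwards [hd.eventually_ne (c := 0) (sub_ne_zero.2 (h.resolve_left (not_not.2 hz)))]
      with x hx using sub_ne_zero.1 hx
  · exact ((hf.continuousAt.ne_iff_eventually_ne hg.continuousAt).1 hz).filter_mono
      nhdsWithin_le_nhds

theorem deriv_eq_of_eventuallyEq_nhdsWithin {𝕜 F : Type*} [NontriviallyNormedField 𝕜]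
    [NormedAddCommGroup F] [NormedSpace 𝕜 F] {f g : 𝕜 → F} {s : Set 𝕜} {z : 𝕜}
    (hs : UniqueDiffWithinAt 𝕜 s z) (hz : z ∈ s)
    (hf : DifferentiableAt 𝕜 f z) (hg : DifferentiableAt 𝕜 g z) (h : f =ᶠ[𝓝[s] z] g) :
    deriv f z = deriv g z := by
  rw [← hf.derivWithin hs, ← hg.derivWithin hs, h.derivWithin_eq_of_mem hz]

def matchSet {ι ι' X Y : Type*} (f : ι → X → Y) (g : ι' → X → Y) (τ : ι ≃ ι') : Set X :=
  {x | ∀ i, f i x = g (τ i) x}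

section matchSet

variable {ι ι' X Y : Type*} {f : ι → X → Y} {g : ι' → X → Y}

theorem isClosed_matchSet [TopologicalSpace X] [TopologicalSpace Y] [T2Space Y]
    (hf : ∀ i, Continuous (f i)) (hg : ∀ i, Continuous (g i)) (τ : ι ≃ ι') :
    IsClosed (matchSet f g τ) := by
  simp only [matchSet, ofPred_forall]
  exact isClosed_iInter fun i => isClosed_eq (hf i) (hg _)

theorem eq_of_mem_matchSet {x : X} {τ σ : ι ≃ ι'} (hinj : Injective fun i => g i x)
    (hτ : x ∈ matchSet f g τ) (hσ : x ∈ matchSet f g σ) : τ = σ :=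
  Equiv.ext fun i => hinj ((hτ i).symm.trans (hσ i))

theorem IsPreconnected.exists_subset_matchSet [Finite ι] [Finite ι'] [TopologicalSpace X]
    [TopologicalSpace Y] [T2Space Y] (hf : ∀ i, Continuous (f i)) (hg : ∀ i, Continuous (g i))
    {s : Set X} (hs : IsPreconnected s) (hne : s.Nonempty)
    (hgood : ∀ x ∈ s, (∃ τ, x ∈ matchSet f g τ) ∧ Injective fun i => g i x) :
    ∃ τ, s ⊆ matchSet f g τ :=
  hs.exists_subset_of_isClosed_cover hne (isClosed_matchSet hf hg)
    (fun x hx => mem_iUnion.2 (hgood x hx).1) fun _ _ hne =>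
      eq_empty_of_forall_notMem fun x ⟨hx, hτ, hσ⟩ =>
        hne (eq_of_mem_matchSet (hgood x hx).2 hτ hσ)

end matchSet

section SeparatedAt

variable {ι ι' E F : Type*} [NormedAddCommGroup E] [NormedSpace ℝ E]
  [NormedAddCommGroup F] [NormedSpace ℝ F]

def SeparatedAt (g : ι → ℝ → E) (z : ℝ) : Prop :=
  Pairwise fun i j => g i z ≠ g j z ∨ deriv (g i) z ≠ deriv (g j) z

theorem SeparatedAt.eventually_injective [Finite ι] {g : ι → ℝ → E} {z : ℝ}
    (h : SeparatedAt g z) (hg : ∀ i, DifferentiableAt ℝ (g i) z) :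
    ∀ᶠ x in 𝓝[≠] z, Injective fun i => g i x := by
  have hne : ∀ i j, ∀ᶠ x in 𝓝[≠] z, i ≠ j → g i x ≠ g j x := fun i j => by
    obtain rfl | hij := eq_or_ne i j
    · simp
    · exact (eventually_nhdsNE_ne_of_ne_or_deriv_ne (hg i) (hg j) (h hij)).mono fun x hx _ => hx
  filter_upwards [eventually_all.2 fun i => eventually_all.2 (hne i)] with x hx i j hij
  by_contra hne
  exact hx i j hne hij

theorem SeparatedAt.prodMk_of_right {f : ι → ℝ → E} {g : ι → ℝ → F} {z : ℝ}
    (h : SeparatedAt g z) (hf : ∀ i, DifferentiableAt ℝ (f i) z)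
    (hg : ∀ i, DifferentiableAt ℝ (g i) z) :
    SeparatedAt (fun i x => (f i x, g i x)) z := by
  intro i j hij
  have := h hij
  simp only [((hf _).hasDerivAt.prodMk (hg _).hasDerivAt).deriv, ne_eq, Prod.mk.injEq]
  tauto

theorem eq_of_matchSet_mem_nhdsLE_of_mem_nhdsGE {f : ι → ℝ → E} {g : ι' → ℝ → E} {z : ℝ}
    {τ σ : ι ≃ ι'} (hf : ∀ i, DifferentiableAt ℝ (f i) z) (hg : ∀ i, DifferentiableAt ℝ (g i) z)
    (hsep : SeparatedAt g z) (hτ : matchSet f g τ ∈ 𝓝[≤] z) (hσ : matchSet f g σ ∈ 𝓝[≥] z) :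
    τ = σ := by
  refine Equiv.ext fun i => by_contra fun hne => (hsep hne).elim (fun h => h ?_) fun h => h ?_
  · exact (mem_of_mem_nhdsWithin self_mem_Iic hτ i).symm.trans
      (mem_of_mem_nhdsWithin self_mem_Ici hσ i)
  · rw [← deriv_eq_of_eventuallyEq_nhdsWithin (uniqueDiffWithinAt_Iic z) self_mem_Iic (hf i)
      (hg (τ i)) (mem_of_superset hτ fun x hx => hx i),
      deriv_eq_of_eventuallyEq_nhdsWithin (uniqueDiffWithinAt_Ici z) self_mem_Ici (hf i)
      (hg (σ i)) (mem_of_superset hσ fun x hx => hx i)]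

theorem exists_matchSet_mem_nhds [Finite ι] [Finite ι'] {f : ι → ℝ → E} {g : ι' → ℝ → E}
    {z : ℝ} (hf : ∀ i, Differentiable ℝ (f i)) (hg : ∀ i, Differentiable ℝ (g i))
    (hsep : SeparatedAt g z)
    (hgood : ∀ᶠ x in 𝓝[≠] z, (∃ τ, x ∈ matchSet f g τ) ∧ Injective fun i => g i x) :
    ∃ τ, matchSet f g τ ∈ 𝓝 z := by
  have hfc := fun i => (hf i).continuous
  have hgc := fun i => (hg i).continuous
  obtain ⟨a, ha : a < z, hleft⟩ :=
    mem_nhdsLT_iff_exists_Ioo_subset.1 (hgood.filter_mono (nhdsLT_le_nhdsNE z))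
  obtain ⟨b, hb : z < b, hright⟩ :=
    mem_nhdsGT_iff_exists_Ioo_subset.1 (hgood.filter_mono (nhdsGT_le_nhdsNE z))
  obtain ⟨τ, hτ⟩ := isPreconnected_Ioo.exists_subset_matchSet hfc hgc (nonempty_Ioo.2 ha) hleft
  obtain ⟨σ, hσ⟩ := isPreconnected_Ioo.exists_subset_matchSet hfc hgc (nonempty_Ioo.2 hb) hright
  have hτ' : Icc a z ⊆ matchSet f g τ :=
    closure_Ioo ha.ne ▸ closure_minimal hτ (isClosed_matchSet hfc hgc τ)
  have hσ' : Icc z b ⊆ matchSet f g σ :=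
    closure_Ioo hb.ne ▸ closure_minimal hσ (isClosed_matchSet hfc hgc σ)
  obtain rfl : τ = σ := eq_of_matchSet_mem_nhdsLE_of_mem_nhdsGE
    (fun i => (hf i).differentiableAt) (fun i => (hg i).differentiableAt) hsep
    (mem_of_superset (Icc_mem_nhdsLE ha) hτ') (mem_of_superset (Icc_mem_nhdsGE hb) hσ')
  exact ⟨τ, mem_of_superset (Ioo_mem_nhds ha hb) fun x hx =>
    (le_total x z).elim (fun h => hτ' ⟨hx.1.le, h⟩) fun h => hσ' ⟨h, hx.2.le⟩⟩

theorem IsPreconnected.exists_subset_matchSet_of_separatedAt [Finite ι] [Finite ι']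
    {f : ι → ℝ → E} {g : ι' → ℝ → E} {I : Set ℝ} (hI : IsPreconnected I) (hIne : I.Nonempty)
    (hf : ∀ i, Differentiable ℝ (f i)) (hg : ∀ i, Differentiable ℝ (g i))
    (hsep : ∀ z ∈ I, SeparatedAt g z)
    (hmatch : ∀ z ∈ I, ∀ᶠ x in 𝓝[≠] z, ∃ τ, x ∈ matchSet f g τ) :
    ∃ τ, I ⊆ matchSet f g τ := by
  have hgood : ∀ z ∈ I, ∀ᶠ x in 𝓝[≠] z, (∃ τ, x ∈ matchSet f g τ) ∧ Injective fun i => g i x :=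
    fun z hz => (hmatch z hz).and
      ((hsep z hz).eventually_injective fun i => (hg i).differentiableAt)
  have hdisj : Pairwise fun τ σ =>
      I ∩ (interior (matchSet f g τ) ∩ interior (matchSet f g σ)) = ∅ := by
    intro τ σ hne
    refine eq_empty_of_forall_notMem fun z ⟨hz, hτ, hσ⟩ => hne ?_
    have hboth : ∀ᶠ x in 𝓝[≠] z, x ∈ matchSet f g τ ∧ x ∈ matchSet f g σ :=
      mem_nhdsWithin_of_mem_nhds (inter_mem (mem_interior_iff_mem_nhds.1 hτ)
        (mem_interior_iff_mem_nhds.1 hσ))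
    obtain ⟨x, ⟨-, hinj⟩, hxτ, hxσ⟩ := ((hgood z hz).and hboth).exists
    exact eq_of_mem_matchSet hinj hxτ hxσ
  obtain ⟨τ, hτ⟩ := hI.exists_subset_of_isOpen_cover hIne (fun τ => isOpen_interior)
    (fun z hz => mem_iUnion.2 ((exists_matchSet_mem_nhds hf hg (hsep z hz) (hgood z hz)).imp
      fun τ => mem_interior_iff_mem_nhds.2)) hdisj
  exact ⟨τ, hτ.trans interior_subset⟩

end SeparatedAt

theorem separatedAt_prodMk_of_sq_add_sq_ne_zero {ι : Type*} {m v : ι → ℝ → ℝ} {z : ℝ}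
    (hm : ∀ i, DifferentiableAt ℝ (m i) z) (hv : ∀ i, DifferentiableAt ℝ (v i) z)
    (h : ∀ i j, i ≠ j → (m i z - m j z) ^ 2 + (deriv (m i) z - deriv (m j) z) ^ 2 +
        (v i z - v j z) ^ 2 + (deriv (v i) z - deriv (v j) z) ^ 2 ≠ 0) :
    SeparatedAt (fun i x => (m i x, v i x)) z := by
  intro i j hij
  by_contra hc
  simp only [((hm _).hasDerivAt.prodMk (hv _).hasDerivAt).deriv, ne_eq, Prod.mk.injEq, not_or,
    not_not] at hc
  exact h i j hij (by simp [hc.1.1, hc.1.2, hc.2.1, hc.2.2])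

theorem scalar_nonparametric_mixture_identifiability_general
    {k k' : ℕ}
    -- `I` is a nonempty open interval
    (I : Set ℝ) (hIopen : IsOpen I) (hIne : I.Nonempty) (hIinterval : I.OrdConnected)
    -- the component proportion, mean and variance functions
    (w m v : Fin k → ℝ → ℝ) (w' m' v' : Fin k' → ℝ → ℝ)
    (hw : ∀ j z, 0 < w j z ∧ w j z < 1) (hw' : ∀ j z, 0 < w' j z ∧ w' j z < 1)
    (hv : ∀ j z, 0 < v j z) (hv' : ∀ j z, 0 < v' j z)
    -- differentiability
    (hdiff : ∀ j, Differentiable ℝ (w j) ∧ Differentiable ℝ (m j) ∧ Differentiable ℝ (v j))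
    (hdiff' : ∀ j, Differentiable ℝ (w' j) ∧ Differentiable ℝ (m' j) ∧ Differentiable ℝ (v' j))
    -- separation of components on `I`
    (hsep : ∀ i j : Fin k, i ≠ j → ∀ z ∈ I,
      (m i z - m j z) ^ 2 + (deriv (m i) z - deriv (m j) z) ^ 2 +
        (v i z - v j z) ^ 2 + (deriv (v i) z - deriv (v j) z) ^ 2 ≠ 0)
    (hsep' : ∀ i j : Fin k', i ≠ j → ∀ z ∈ I,
      (m' i z - m' j z) ^ 2 + (deriv (m' i) z - deriv (m' j) z) ^ 2 +
        (v' i z - v' j z) ^ 2 + (deriv (v' i) z - deriv (v' j) z) ^ 2 ≠ 0)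
    -- the two mixture densities agree on `I`
    (heq : ∀ z ∈ I, ∀ y : ℝ,
      ∑ j, w j z * normalPDF y (m j z) (v j z) =
        ∑ j, w' j z * normalPDF y (m' j z) (v' j z)) :
    k = k' ∧ ∃ τ : Fin k ≃ Fin k',
      ∀ j : Fin k, ∀ z ∈ I,
        w j z = w' (τ j) z ∧ m j z = m' (τ j) z ∧ v j z = v' (τ j) z := by
  have hpair : ∀ z ∈ I, SeparatedAt (fun j x => (m j x, v j x)) z := fun z hz =>
    separatedAt_prodMk_of_sq_add_sq_ne_zero (fun j => (hdiff j).2.1 z) (fun j => (hdiff j).2.2 z)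
      fun i j hij => hsep i j hij z hz
  have hpair' : ∀ z ∈ I, SeparatedAt (fun j x => (m' j x, v' j x)) z := fun z hz =>
    separatedAt_prodMk_of_sq_add_sq_ne_zero (fun j => (hdiff' j).2.1 z)
      (fun j => (hdiff' j).2.2 z) fun i j hij => hsep' i j hij z hz
  have hmatch : ∀ z ∈ I, ∀ᶠ x in 𝓝[≠] z, ∃ τ, x ∈ matchSet (fun j x => (w j x, m j x, v j x))
      (fun j x => (w' j x, m' j x, v' j x)) τ := by
    intro z hz
    filter_upwards
      [(hpair z hz).eventually_injective fun j => ((hdiff j).2.1 z).prodMk ((hdiff j).2.2 z),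
      (hpair' z hz).eventually_injective fun j => ((hdiff' j).2.1 z).prodMk ((hdiff' j).2.2 z),
      (hIopen.eventually_mem hz).filter_mono nhdsWithin_le_nhds] with x hinj hinj' hx
    obtain ⟨τ, hτ⟩ := exists_equiv_of_normal_mixture_eq (fun j => (hw j x).1.ne')
      (fun j => (hw' j x).1.ne') (fun j => hv j x) (fun j => hv' j x) hinj hinj' (heq x hx)
    exact ⟨τ, fun j => Prod.ext (hτ j).1 (hτ j).2⟩
  obtain ⟨τ, hτ⟩ := hIinterval.isPreconnected.exists_subset_matchSet_of_separatedAt hIne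
    (fun j => (hdiff j).1.prodMk ((hdiff j).2.1.prodMk (hdiff j).2.2))
    (fun j => (hdiff' j).1.prodMk ((hdiff' j).2.1.prodMk (hdiff' j).2.2))
    (fun z hz => (hpair' z hz).prodMk_of_right (fun j => (hdiff' j).1 z)
      fun j => ((hdiff' j).2.1 z).prodMk ((hdiff' j).2.2 z)) hmatch
  refine ⟨by simpa using Fintype.card_congr τ, τ, fun j z hz => ?_⟩
  simpa [Prod.ext_iff] using hτ hz j

/-- Identifiability of scalar nonparametric mixtures of regressions on a nonempty
open interval `I ⊆ ℝ`. -/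
theorem scalar_nonparametric_mixture_identifiability
    {k k' : ℕ} (hk : 1 ≤ k) (hk' : 1 ≤ k')
    -- `I` is a nonempty open interval
    (I : Set ℝ) (hIopen : IsOpen I) (hIne : I.Nonempty) (hIinterval : I.OrdConnected)
    -- the component proportion, mean and variance functions
    (w m v : Fin k → ℝ → ℝ) (w' m' v' : Fin k' → ℝ → ℝ)
    (hw : ∀ j z, 0 < w j z ∧ w j z < 1) (hw' : ∀ j z, 0 < w' j z ∧ w' j z < 1)
    (hwsum : ∀ z, ∑ j, w j z = 1) (hw'sum : ∀ z, ∑ j, w' j z = 1)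
    (hv : ∀ j z, 0 < v j z) (hv' : ∀ j z, 0 < v' j z)
    -- differentiability
    (hdiff : ∀ j, Differentiable ℝ (w j) ∧ Differentiable ℝ (m j) ∧ Differentiable ℝ (v j))
    (hdiff' : ∀ j, Differentiable ℝ (w' j) ∧ Differentiable ℝ (m' j) ∧ Differentiable ℝ (v' j))
    -- separation of components on `I`
    (hsep : ∀ i j : Fin k, i ≠ j → ∀ z ∈ I,
      (m i z - m j z) ^ 2 + (deriv (m i) z - deriv (m j) z) ^ 2 +
        (v i z - v j z) ^ 2 + (deriv (v i) z - deriv (v j) z) ^ 2 ≠ 0)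
    (hsep' : ∀ i j : Fin k', i ≠ j → ∀ z ∈ I,
      (m' i z - m' j z) ^ 2 + (deriv (m' i) z - deriv (m' j) z) ^ 2 +
        (v' i z - v' j z) ^ 2 + (deriv (v' i) z - deriv (v' j) z) ^ 2 ≠ 0)
    -- the two mixture densities agree on `I`
    (heq : ∀ z ∈ I, ∀ y : ℝ,
      ∑ j, w j z * normalPDF y (m j z) (v j z) =
        ∑ j, w' j z * normalPDF y (m' j z) (v' j z)) :
    k = k' ∧ ∃ τ : Fin k ≃ Fin k',
      ∀ j : Fin k, ∀ z ∈ I,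
        w j z = w' (τ j) z ∧ m j z = m' (τ j) z ∧ v j z = v' (τ j) z :=
  scalar_nonparametric_mixture_identifiability_general I hIopen hIne hIinterval w m v w' m' v' hw
    hw' hv hv' hdiff hdiff' hsep hsep' heq
end
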